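/- Let k ≥ 0 and let K be the reference triangle {(x,y) : x > 0, y > 0, x + y < 1}. For every edge e of K with affine parametrization γ_e : [0,1] → e and unit tangent vector t_e: (i) the trace space {p ∘ γ_e : p ∈ 𝒫_{k+1}} equals the space of univariate polynomials of degree at most k+1 in the parameter; and (ii) the tangential trace space {(v · t_e) ∘ γ_e : v ∈ 𝐏_k ⊕ 𝐱×𝒫̃_k} equals the space of univariate polynomials of degree at most k in the parameter. -/

import Mathlib

open MvPolynomial

/-- Polynomials on `ℝ²`. -/
abbrev R2 := MvPolynomial (Fin 2) ℝ

/-- Membership in the two-dimensional Nédélec-type space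
`𝐏_k ⊕ 𝐱×𝒫̃_k = {w + (y p, −x p) : w ∈ 𝐏_k, p ∈ 𝒫̃_k}`. -/
def memNed2 (k : ℕ) (v : R2 × R2) : Prop :=
  ∃ w₁ w₂ p : R2, w₁.totalDegree ≤ k ∧ w₂.totalDegree ≤ k ∧
    p.IsHomogeneous k ∧ v = (w₁ + X 1 * p, w₂ - X 0 * p)

/-- Affine parametrization `γ(t) = (1−t)·A + t·B` of the segment `[A,B]`,
written as a point of `ℝ²` in `Fin 2 → ℝ` form. -/
def param (A B : ℝ × ℝ) (t : ℝ) : Fin 2 → ℝ :=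
  ![(1 - t) * A.1 + t * B.1, (1 - t) * A.2 + t * B.2]

/-- The unit tangent vector `t_e = (B − A)/|B − A|` of the segment `[A,B]`. -/
noncomputable def tangent (A B : ℝ × ℝ) : ℝ × ℝ :=
  ((B.1 - A.1) / Real.sqrt ((B.1 - A.1) ^ 2 + (B.2 - A.2) ^ 2),
   (B.2 - A.2) / Real.sqrt ((B.1 - A.1) ^ 2 + (B.2 - A.2) ^ 2))

/-- The affine substitution polynomials realizing the parametrization. -/
noncomputable def gmap (A B : ℝ × ℝ) : Fin 2 → Polynomial ℝ :=
  ![Polynomial.C A.1 + Polynomial.X * Polynomial.C (B.1 - A.1),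
    Polynomial.C A.2 + Polynomial.X * Polynomial.C (B.2 - A.2)]

lemma eval_aeval_poly (g : Fin 2 → Polynomial ℝ) (p : R2) (t : ℝ) :
    (aeval g p).eval t = eval (fun i => (g i).eval t) p := by
  induction p using MvPolynomial.induction_on with
  | C a => simp
  | add p q hp hq => simp [hp, hq]
  | mul_X p i hp => simp [hp]

lemma eval_gmap (A B : ℝ × ℝ) (p : R2) (t : ℝ) :
    (aeval (gmap A B) p).eval t = eval (param A B t) p := by
  rw [eval_aeval_poly]
  have h : (fun i => Polynomial.eval t (gmap A B i)) = param A B t := by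
    funext i
    fin_cases i <;> simp [gmap, param] <;> ring
  rw [h]

lemma natDegree_aeval_gmap (A B : ℝ × ℝ) (p : R2) :
    (aeval (gmap A B) p).natDegree ≤ p.totalDegree := by
  have hg : ∀ i : Fin 2, ((gmap A B) i).natDegree ≤ 1 := by
    intro i
    fin_cases i <;>
      exact (Polynomial.natDegree_add_le _ _).trans
        (max_le (by simp) ((Polynomial.natDegree_mul_le).trans (by simp)))
  rw [aeval_def, eval₂_eq]
  refine (Polynomial.natDegree_sum_le _ _).trans ?_
  rw [Finset.fold_max_le]
  refine ⟨Nat.zero_le _, fun d hd => ?_⟩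
  have h1 : (algebraMap ℝ (Polynomial ℝ) (coeff d p) *
      ∏ i ∈ d.support, (gmap A B) i ^ d i).natDegree ≤
      (∏ i ∈ d.support, (gmap A B) i ^ d i).natDegree := by
    rw [Polynomial.algebraMap_eq]
    exact Polynomial.natDegree_C_mul_le _ _
  refine h1.trans ((Polynomial.natDegree_prod_le _ _).trans ?_)
  have h2 : ∀ i ∈ d.support, ((gmap A B) i ^ d i).natDegree ≤ d i := by
    intro i _
    refine (Polynomial.natDegree_pow_le).trans ?_
    calc d i * ((gmap A B) i).natDegree ≤ d i * 1 := Nat.mul_le_mul_left _ (hg i)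
      _ = d i := Nat.mul_one _
  refine (Finset.sum_le_sum h2).trans ?_
  exact MvPolynomial.le_totalDegree hd

lemma totalDegree_paeval_le (L : R2) (hL : L.totalDegree ≤ 1) (u : Polynomial ℝ) :
    (Polynomial.aeval L u).totalDegree ≤ u.natDegree := by
  rw [Polynomial.aeval_eq_sum_range]
  refine (totalDegree_finset_sum _ _).trans (Finset.sup_le fun i hi => ?_)
  refine (totalDegree_smul_le _ _).trans ((totalDegree_pow _ _).trans ?_)
  have hi' : i ≤ u.natDegree := Nat.lt_succ_iff.mp (Finset.mem_range.mp hi)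
  calc i * L.totalDegree ≤ i * 1 := Nat.mul_le_mul_left _ hL
    _ = i := Nat.mul_one _
    _ ≤ u.natDegree := hi'

lemma eval_paeval (L : R2) (u : Polynomial ℝ) (x : Fin 2 → ℝ) :
    eval x (Polynomial.aeval L u) = u.eval (eval x L) := by
  induction u using Polynomial.induction_on' with
  | add p q hp hq => simp [hp, hq]
  | monomial n a => simp [Polynomial.aeval_monomial, Polynomial.eval_monomial]

/-- On every edge `e` (with endpoints `A ≠ B` among the vertices
`(0,0), (1,0), (0,1)` of the reference triangle), the trace space of
`𝒫_{k+1}` is the space of univariate polynomials of degree at most `k+1` in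
the parameter, and the tangential trace space of `𝐏_k ⊕ 𝐱×𝒫̃_k` is the space
of univariate polynomials of degree at most `k` in the parameter. -/
theorem stmt_18 (k : ℕ) (A B : ℝ × ℝ)
    (hA : A ∈ ({(0, 0), (1, 0), (0, 1)} : Set (ℝ × ℝ)))
    (hB : B ∈ ({(0, 0), (1, 0), (0, 1)} : Set (ℝ × ℝ)))
    (hAB : A ≠ B) :
    ({f : ℝ → ℝ | ∃ p : R2, p.totalDegree ≤ k + 1 ∧
        f = fun t => eval (param A B t) p} =
      {f : ℝ → ℝ | ∃ u : Polynomial ℝ, u.natDegree ≤ k + 1 ∧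
        f = fun t => u.eval t}) ∧
    ({f : ℝ → ℝ | ∃ v : R2 × R2, memNed2 k v ∧
        f = fun t => eval (param A B t) v.1 * (tangent A B).1
          + eval (param A B t) v.2 * (tangent A B).2} =
      {f : ℝ → ℝ | ∃ u : Polynomial ℝ, u.natDegree ≤ k ∧
        f = fun t => u.eval t}) := by
  -- some nonvanishing facts
  have hd : B.1 - A.1 ≠ 0 ∨ B.2 - A.2 ≠ 0 := by
    by_contra h
    push_neg at h
    exact hAB (Prod.ext (by linarith [h.1]) (by linarith [h.2]))
  have hpos : 0 < (B.1 - A.1) ^ 2 + (B.2 - A.2) ^ 2 := by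
    rcases hd with h | h
    · exact add_pos_of_pos_of_nonneg (pow_two_pos_of_ne_zero h) (sq_nonneg _)
    · exact add_pos_of_nonneg_of_pos (sq_nonneg _) (pow_two_pos_of_ne_zero h)
  set s := Real.sqrt ((B.1 - A.1) ^ 2 + (B.2 - A.2) ^ 2) with hs_def
  have hs_pos : 0 < s := Real.sqrt_pos.mpr hpos
  have hs_sq : s ^ 2 = (B.1 - A.1) ^ 2 + (B.2 - A.2) ^ 2 := Real.sq_sqrt hpos.le
  have hnorm : (tangent A B).1 ^ 2 + (tangent A B).2 ^ 2 = 1 := by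
    have : (tangent A B).1 ^ 2 + (tangent A B).2 ^ 2
        = ((B.1 - A.1) ^ 2 + (B.2 - A.2) ^ 2) / s ^ 2 := by
      simp only [tangent, ← hs_def]
      ring
    rw [this, ← hs_sq, div_self (by positivity)]
  -- a linear polynomial recovering the parameter
  obtain ⟨L, hL1, hLt⟩ : ∃ L : R2, L.totalDegree ≤ 1 ∧
      ∀ t : ℝ, eval (param A B t) L = t := by
    have hdeg : ∀ (a b : ℝ) (i : Fin 2), (C a * X i + C b : R2).totalDegree ≤ 1 := by
      intro a b i
      refine (totalDegree_add _ _).trans (max_le ?_ (by simp))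
      exact (totalDegree_mul _ _).trans (by simp [totalDegree_X])
    rcases hd with h | h
    · refine ⟨C (B.1 - A.1)⁻¹ * X 0 + C (-A.1 * (B.1 - A.1)⁻¹), hdeg _ _ _, fun t => ?_⟩
      simp [param]
      field_simp
      ring
    · refine ⟨C (B.2 - A.2)⁻¹ * X 1 + C (-A.2 * (B.2 - A.2)⁻¹), hdeg _ _ _, fun t => ?_⟩
      simp [param]
      field_simp
      ring
  -- the key constancy of the rotated-position tangential component
  have hconst : ∀ t : ℝ, param A B t 1 * (tangent A B).1 - param A B t 0 * (tangent A B).2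
      = (A.2 * B.1 - A.1 * B.2) / s := by
    intro t
    simp only [param, tangent, ← hs_def, Matrix.cons_val_zero, Matrix.cons_val_one,
      Matrix.head_cons]
    ring
  constructor
  · -- part (i)
    ext f
    constructor
    · rintro ⟨p, hp, rfl⟩
      exact ⟨aeval (gmap A B) p, (natDegree_aeval_gmap A B p).trans hp,
        funext fun t => by rw [eval_gmap]⟩
    · rintro ⟨u, hu, rfl⟩
      refine ⟨Polynomial.aeval L u, (totalDegree_paeval_le L hL1 u).trans hu, ?_⟩
      funext t
      rw [eval_paeval, hLt]
  · -- part (ii)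
    ext f
    constructor
    · rintro ⟨v, ⟨w₁, w₂, p, hw₁, hw₂, hp, rfl⟩, rfl⟩
      set c : ℝ := (A.2 * B.1 - A.1 * B.2) / s with hc
      refine ⟨Polynomial.C (tangent A B).1 * aeval (gmap A B) w₁
        + Polynomial.C (tangent A B).2 * aeval (gmap A B) w₂
        + Polynomial.C c * aeval (gmap A B) p, ?_, ?_⟩
      · refine (Polynomial.natDegree_add_le _ _).trans (max_le
          ((Polynomial.natDegree_add_le _ _).trans (max_le ?_ ?_)) ?_)
        · exact (Polynomial.natDegree_C_mul_le _ _).trans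
            ((natDegree_aeval_gmap A B w₁).trans hw₁)
        · exact (Polynomial.natDegree_C_mul_le _ _).trans
            ((natDegree_aeval_gmap A B w₂).trans hw₂)
        · exact (Polynomial.natDegree_C_mul_le _ _).trans
            ((natDegree_aeval_gmap A B p).trans hp.totalDegree_le)
      · funext t
        have h := hconst t
        simp only [Polynomial.eval_add, Polynomial.eval_mul, Polynomial.eval_C,
          eval_gmap, map_add, map_sub, map_mul, eval_X]
        linear_combination eval (param A B t) p * h
    · rintro ⟨u, hu, rfl⟩
      set p : R2 := Polynomial.aeval L u with hp_def
      have hpd : p.totalDegree ≤ k := (totalDegree_paeval_le L hL1 u).trans hu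
      refine ⟨(C (tangent A B).1 * p, C (tangent A B).2 * p),
        ⟨C (tangent A B).1 * p, C (tangent A B).2 * p, 0, ?_, ?_, ?_, by simp⟩, ?_⟩
      · exact (totalDegree_mul _ _).trans (by simpa using hpd)
      · exact (totalDegree_mul _ _).trans (by simpa using hpd)
      · exact isHomogeneous_zero _ _ _
      · funext t
        have hev : eval (param A B t) p = u.eval t := by
          rw [hp_def, eval_paeval, hLt]
        simp only [map_mul, eval_C, hev]
        linear_combination (-(Polynomial.eval t u)) * hnorm
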